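/- Let E be a real Banach space and f : ℝ × E → E continuously differentiable such that there is a continuous function φ : [0,∞) → ℝ with ‖f(t,x)‖ + ‖∂_t f(t,x)‖ ≤ φ(t)(1 + ‖x‖) and ‖∂_x f(t,x) v‖² ≤ φ(t)² (1 + ‖x‖² + ‖v‖²) for all t ≥ 0 and x, v ∈ E. Let v : [0,∞) → E be continuous with v(0) = 0. Then for every x₀ ∈ E there exist τ > 0, an open neighborhood V of x₀ in E, and a map X : V → C([0,τ], E), continuously differentiable in the initial condition, such that for every x ∈ V the function X(x) satisfies X(x)(t) = x + ∫_0^t f(s, X(x)(s)) ds + v(t) for all t ∈ [0,τ]. In particular a solution of the forced integral equation exists and depends smoothly on its initial condition. -/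

import Mathlib

/-!
On `B = C([0, τ], E)` the equation reads `u = Φ (x, u)`, `Φ (x, u) = x + ∫₀^· f (s, u s) ds + v`.
Scaling the direction in the bound on `∂ₓf` shows `‖∂ₓf (t, ·)‖ ≤ |φ t|`, so the Nemytskii operator
`u ↦ f (·, u ·)` is `C¹` on `B` with derivative bounded by a bound `L` of `|φ|` on `[0, 1]`. For
`τ L < 1` every `u ↦ Φ (x, u)` is then a contraction: the contraction principle gives a solution for
`x₀`, and the implicit function theorem applied to `u - Φ (x, u)`, whose `u`-derivative `1 - ∂ᵤΦ` is
invertible by a Neumann series, continues it to a `C¹` family of solutions for `x` near `x₀`.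
-/

open Set Filter ContinuousMap

lemma ContinuousLinearMap.opNorm_le_of_sq_norm_apply_le {E F : Type*}
    [SeminormedAddCommGroup E] [NormedSpace ℝ E] [SeminormedAddCommGroup F] [NormedSpace ℝ F]
    (A : E →L[ℝ] F) {a c : ℝ} (h : ∀ v, ‖A v‖ ^ 2 ≤ a ^ 2 * (c + ‖v‖ ^ 2)) : ‖A‖ ≤ |a| := by
  refine A.opNorm_le_bound (abs_nonneg a) fun v => ?_
  by_contra! hlt
  have hd : 0 < ‖A v‖ ^ 2 - a ^ 2 * ‖v‖ ^ 2 := by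
    have := pow_lt_pow_left₀ hlt (by positivity) two_ne_zero
    rw [mul_pow, sq_abs] at this
    linarith
  -- the affine term `a ^ 2 * c` cannot absorb the quadratic growth along the ray through `v`
  obtain ⟨s, hs⟩ := (((tendsto_pow_atTop two_ne_zero).atTop_mul_const hd).eventually_gt_atTop
    (a ^ 2 * c)).exists
  have hsv := h (s • v)
  rw [map_smul, norm_smul, norm_smul, mul_pow, mul_pow, Real.norm_eq_abs, sq_abs] at hsv
  nlinarith

lemma ContinuousLinearMap.isInvertible_one_sub {B : Type*} [NormedAddCommGroup B]
    [NormedSpace ℝ B] [CompleteSpace B] {A : B →L[ℝ] B} (hA : ‖A‖ < 1) :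
    (1 - A).IsInvertible := by
  obtain ⟨w, hw⟩ := isUnit_one_sub_of_norm_lt_one hA
  exact ⟨ContinuousLinearEquiv.unitsEquiv ℝ B w, by rw [← hw]; rfl⟩

lemma DifferentiableAt.hasFDerivAt_comp_prodMk_right {E B F : Type*} [NormedAddCommGroup E]
    [NormedSpace ℝ E] [NormedAddCommGroup B] [NormedSpace ℝ B] [NormedAddCommGroup F]
    [NormedSpace ℝ F] {Φ : E × B → F} {x : E} {u : B} (hΦ : DifferentiableAt ℝ Φ (x, u)) :
    HasFDerivAt (fun u => Φ (x, u)) (fderiv ℝ Φ (x, u) ∘L .inr ℝ E B) u :=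
  hΦ.hasFDerivAt.comp u (hasFDerivAt_prodMk_right x u)

namespace ContinuousMap

section Nemytskii

variable {K E F : Type*} [TopologicalSpace K] [NormedAddCommGroup E] [NormedAddCommGroup F]

def nemytskii (g : C(K × E, F)) (u : C(K, E)) : C(K, F) :=
  g.comp ((ContinuousMap.id K).prodMk u)

@[simp] lemma nemytskii_apply (g : C(K × E, F)) (u : C(K, E)) (k : K) :
    nemytskii g u k = g (k, u k) := rfl

variable [CompactSpace K]

lemma norm_const_le (c : E) : ‖const K c‖ ≤ ‖c‖ :=
  (norm_le _ (norm_nonneg c)).2 fun _ => le_rfl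

lemma continuous_nemytskii (g : C(K × E, F)) : Continuous (nemytskii g) :=
  continuous_of_continuous_uncurry _ <| by
    change Continuous fun p : C(K, E) × K => g (p.2, p.1 p.2)
    fun_prop

lemma exists_pos_forall_dist_lt_near_graph (g : C(K × E, F)) (u : C(K, E)) {ε : ℝ}
    (hε : 0 < ε) : ∃ δ > 0, ∀ k y, dist y (u k) < δ → dist (g (k, y)) (g (k, u k)) < ε := by
  obtain ⟨δ, hδ, hu⟩ := Metric.continuous_iff.1 (continuous_nemytskii g) u ε hε
  refine ⟨δ, hδ, fun k y hy => ?_⟩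
  -- shift `u` by a constant so that it passes through `y` at `k`
  set u' := u + const K (y - u k)
  have hu' : dist u' u < δ := by
    rw [dist_eq_norm, add_sub_cancel_left]
    exact (norm_const_le _).trans_lt (by rwa [← dist_eq_norm])
  simpa [u'] using (dist_apply_le_dist k).trans_lt (hu u' hu')

end Nemytskii

variable {K E F : Type*} [TopologicalSpace K] [CompactSpace K]
  [NormedAddCommGroup E] [NormedSpace ℝ E] [NormedAddCommGroup F] [NormedSpace ℝ F]

noncomputable def constCLM : E →L[ℝ] C(K, E) :=
  LinearMap.mkContinuous
    { toFun := const K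
      map_add' := fun _ _ => rfl
      map_smul' := fun _ _ => rfl }
    1 fun c => (norm_const_le c).trans_eq (one_mul _).symm

@[simp] lemma constCLM_apply (c : E) : constCLM c = const K c := rfl

lemma norm_apply_apply_le (A : C(K, E →L[ℝ] F)) (u : C(K, E)) (k : K) :
    ‖A k (u k)‖ ≤ ‖A‖ * ‖u‖ :=
  (A k).le_of_opNorm_le_of_le (norm_coe_le_norm A k) (norm_coe_le_norm u k)

noncomputable def pointwiseApply : C(K, E →L[ℝ] F) →L[ℝ] C(K, E) →L[ℝ] C(K, F) :=
  LinearMap.mkContinuous₂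
    (LinearMap.mk₂ ℝ (fun (A : C(K, E →L[ℝ] F)) (u : C(K, E)) =>
        (⟨fun k => A k (u k), by fun_prop⟩ : C(K, F)))
      (fun _ _ _ => by ext; simp) (fun _ _ _ => by ext; simp)
      (fun _ _ _ => by ext; simp) (fun _ _ _ => by ext; simp))
    1 fun A u => (norm_le _ (by positivity)).2 fun k => by
      simpa using norm_apply_apply_le A u k

@[simp] lemma pointwiseApply_apply (A : C(K, E →L[ℝ] F)) (u : C(K, E)) (k : K) :
    pointwiseApply A u k = A k (u k) := rfl

lemma norm_pointwiseApply_le (A : C(K, E →L[ℝ] F)) : ‖pointwiseApply A‖ ≤ ‖A‖ :=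
  (pointwiseApply A).opNorm_le_bound (norm_nonneg A) fun u =>
    (norm_le _ (by positivity)).2 (norm_apply_apply_le A u)

theorem hasFDerivAt_nemytskii {g : C(K × E, F)} {g' : C(K × E, E →L[ℝ] F)}
    (hg : ∀ k x, HasFDerivAt (fun y => g (k, y)) (g' (k, x)) x) (u : C(K, E)) :
    HasFDerivAt (nemytskii g) (pointwiseApply (nemytskii g' u)) u := by
  rw [hasFDerivAt_iff_isLittleO_nhds_zero, Asymptotics.isLittleO_iff]
  intro ε hε
  obtain ⟨δ, hδ, hg'δ⟩ := exists_pos_forall_dist_lt_near_graph g' u hε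
  filter_upwards [Metric.ball_mem_nhds 0 hδ] with h hh
  refine (norm_le _ (by positivity)).2 fun k => ?_
  have hmv := (convex_closedBall (u k) ‖h‖).norm_image_sub_le_of_norm_hasFDerivWithin_le'
    (y := u k + h k)
    (fun y _ => (hg k y).hasFDerivWithinAt)
    (fun y hy => by
      rw [← dist_eq_norm]
      exact (hg'δ k y ((Metric.mem_closedBall.1 hy).trans_lt (by simpa using hh))).le)
    (Metric.mem_closedBall_self (norm_nonneg h)) (by simpa using norm_coe_le_norm h k)
  rw [add_sub_cancel_left] at hmv
  simpa using hmv.trans (by gcongr; exact norm_coe_le_norm h k)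

theorem contDiff_nemytskii {g : C(K × E, F)} {g' : C(K × E, E →L[ℝ] F)}
    (hg : ∀ k x, HasFDerivAt (fun y => g (k, y)) (g' (k, x)) x) :
    ContDiff ℝ 1 (nemytskii g) :=
  contDiff_one_iff_hasFDerivAt.2
    ⟨_, pointwiseApply.continuous.comp (continuous_nemytskii g'), hasFDerivAt_nemytskii hg⟩

end ContinuousMap

section Primitive

variable {E : Type*} [NormedAddCommGroup E] [NormedSpace ℝ E] {τ : ℝ}

noncomputable def primitiveCLM (hτ : 0 ≤ τ) : C(Icc 0 τ, E) →L[ℝ] C(Icc 0 τ, E) :=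
  LinearMap.mkContinuous
    { toFun := fun u => ⟨fun t => ∫ s in (0 : ℝ)..t, u (projIcc 0 τ hτ s),
        (intervalIntegral.continuous_primitive
          (fun _ _ => (u.continuous.comp continuous_projIcc).intervalIntegrable _ _) 0).comp
          continuous_subtype_val⟩
      map_add' := fun u w => by
        ext t
        exact intervalIntegral.integral_add
          ((u.continuous.comp continuous_projIcc).intervalIntegrable _ _)
          ((w.continuous.comp continuous_projIcc).intervalIntegrable _ _)
      map_smul' := fun c u => by
        ext t
        exact intervalIntegral.integral_smul c _ }
    τ fun u => (norm_le _ (mul_nonneg hτ (norm_nonneg u))).2 fun t => by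
      calc ‖∫ s in (0 : ℝ)..t, u (projIcc 0 τ hτ s)‖ ≤ ‖u‖ * |(t : ℝ) - 0| :=
            intervalIntegral.norm_integral_le_of_norm_le_const fun s _ => norm_coe_le_norm u _
        _ ≤ τ * ‖u‖ := by
            rw [sub_zero, abs_of_nonneg t.2.1, mul_comm]; gcongr; exact t.2.2

lemma primitiveCLM_apply (hτ : 0 ≤ τ) (u : C(Icc 0 τ, E)) (t : Icc 0 τ) :
    primitiveCLM hτ u t = ∫ s in (0 : ℝ)..t, u (projIcc 0 τ hτ s) := rfl

lemma norm_primitiveCLM_le (hτ : 0 ≤ τ) : ‖primitiveCLM (E := E) hτ‖ ≤ τ :=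
  LinearMap.mkContinuous_norm_le _ hτ _

end Primitive

section FixedPoint

variable {E B : Type*} [NormedAddCommGroup E] [NormedSpace ℝ E] [CompleteSpace E]
  [NormedAddCommGroup B] [NormedSpace ℝ B] [CompleteSpace B]

theorem exists_isOpen_contDiffOn_fixedPoint {Φ : E × B → B} (hΦ : ContDiff ℝ 1 Φ) {q : ℝ}
    (hq : q < 1) (hΦq : ∀ p, ‖fderiv ℝ Φ p ∘L .inr ℝ E B‖ ≤ q) (x₀ : E) :
    ∃ V, IsOpen V ∧ x₀ ∈ V ∧ ∃ X : E → B, ContDiffOn ℝ 1 X V ∧ ∀ x ∈ V, Φ (x, X x) = X x := by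
  have hpartial (x : E) (u : B) :
      HasFDerivAt (fun u => Φ (x, u)) (fderiv ℝ Φ (x, u) ∘L .inr ℝ E B) u :=
    (hΦ.differentiable one_ne_zero _).hasFDerivAt_comp_prodMk_right
  have hcontr : ContractingWith q.toNNReal fun u => Φ (x₀, u) :=
    ⟨Real.toNNReal_lt_one.2 hq, lipschitzWith_of_nnnorm_fderiv_le
      (fun u => (hpartial x₀ u).differentiableAt)
      fun u => NNReal.le_toNNReal_of_coe_le ((hpartial x₀ u).fderiv ▸ hΦq _)⟩
  set u₀ := hcontr.fixedPoint
  set G : E × B → B := fun p => p.2 - Φ p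
  have hG : ContDiffAt ℝ 1 G (x₀, u₀) := (contDiff_snd.sub hΦ).contDiffAt
  have hGinv : (fderiv ℝ G (x₀, u₀) ∘L .inr ℝ E B).IsInvertible := by
    have : fderiv ℝ G (x₀, u₀) ∘L .inr ℝ E B = 1 - fderiv ℝ Φ (x₀, u₀) ∘L .inr ℝ E B := by
      have hGd : HasFDerivAt G (.snd ℝ E B - fderiv ℝ Φ (x₀, u₀)) (x₀, u₀) :=
        hasFDerivAt_snd.sub (hΦ.differentiable one_ne_zero _).hasFDerivAt
      rw [hGd.fderiv]
      ext; simp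
    rw [this]
    exact ContinuousLinearMap.isInvertible_one_sub ((hΦq _).trans_lt hq)
  have hG₀ : G (x₀, u₀) = 0 := sub_eq_zero.2 hcontr.fixedPoint_isFixedPt.symm
  obtain ⟨V, hV, hVo, hx₀V⟩ := eventually_nhds_iff.1
    ((hG.contDiffAt_implicitFunction one_ne_zero hGinv).eventually (by simp) |>.and
      (hG.eventually_apply_implicitFunction one_ne_zero hGinv))
  refine ⟨V, hVo, hx₀V, hG.implicitFunction one_ne_zero hGinv,
    fun x hx => (hV x hx).1.contDiffWithinAt, fun x hx => ?_⟩
  have := (hV x hx).2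
  rw [hG₀] at this
  exact (sub_eq_zero.1 this).symm

end FixedPoint

section PicardMap

variable {E : Type*} [NormedAddCommGroup E] [NormedSpace ℝ E] {τ : ℝ}

noncomputable def picardMap (hτ : 0 ≤ τ) (g : C(Icc 0 τ × E, E)) (w : C(Icc 0 τ, E))
    (p : E × C(Icc 0 τ, E)) : C(Icc 0 τ, E) :=
  constCLM p.1 + primitiveCLM hτ (nemytskii g p.2) + w

variable {g : C(Icc 0 τ × E, E)} {g' : C(Icc 0 τ × E, E →L[ℝ] E)}

lemma hasFDerivAt_picardMap (hτ : 0 ≤ τ)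
    (hg : ∀ k x, HasFDerivAt (fun y => g (k, y)) (g' (k, x)) x)
    (w : C(Icc 0 τ, E)) (p : E × C(Icc 0 τ, E)) :
    HasFDerivAt (picardMap hτ g w) (constCLM ∘L .fst ℝ E _ +
      primitiveCLM hτ ∘L pointwiseApply (nemytskii g' p.2) ∘L .snd ℝ E _) p := by
  have hconst : HasFDerivAt (fun p : E × C(Icc 0 τ, E) => (constCLM p.1 : C(Icc 0 τ, E)))
      (constCLM ∘L .fst ℝ E _) p :=
    ((constCLM (K := Icc 0 τ) (E := E)).hasFDerivAt (x := p.1)).comp p hasFDerivAt_fst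
  have hint : HasFDerivAt (fun p : E × C(Icc 0 τ, E) => primitiveCLM hτ (nemytskii g p.2))
      (primitiveCLM hτ ∘L pointwiseApply (nemytskii g' p.2) ∘L .snd ℝ E _) p :=
    ((primitiveCLM hτ).hasFDerivAt (x := nemytskii g p.2)).comp p
      ((hasFDerivAt_nemytskii hg p.2).comp p hasFDerivAt_snd)
  exact (hconst.add hint).add_const w

lemma contDiff_picardMap (hτ : 0 ≤ τ)
    (hg : ∀ k x, HasFDerivAt (fun y => g (k, y)) (g' (k, x)) x) (w : C(Icc 0 τ, E)) :
    ContDiff ℝ 1 (picardMap hτ g w) :=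
  ((constCLM.contDiff.comp contDiff_fst).add
    ((primitiveCLM hτ).contDiff.comp ((contDiff_nemytskii hg).comp contDiff_snd))).add
    contDiff_const

lemma norm_fderiv_picardMap_comp_inr_le (hτ : 0 ≤ τ)
    (hg : ∀ k x, HasFDerivAt (fun y => g (k, y)) (g' (k, x)) x) {L : ℝ} (hL0 : 0 ≤ L)
    (hL : ∀ q, ‖g' q‖ ≤ L) (w : C(Icc 0 τ, E)) (p : E × C(Icc 0 τ, E)) :
    ‖fderiv ℝ (picardMap hτ g w) p ∘L .inr ℝ E _‖ ≤ τ * L := by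
  have hpartial : fderiv ℝ (picardMap hτ g w) p ∘L .inr ℝ E _ =
      primitiveCLM hτ ∘L pointwiseApply (nemytskii g' p.2) := by
    rw [(hasFDerivAt_picardMap hτ hg w p).fderiv]
    ext
    simp
  rw [hpartial]
  refine (ContinuousLinearMap.opNorm_comp_le _ _).trans ?_
  gcongr
  · exact norm_primitiveCLM_le hτ
  · exact (norm_pointwiseApply_le _).trans ((norm_le _ hL0).2 fun _ => hL _)

theorem exists_isOpen_contDiffOn_forced_solution [CompleteSpace E] {τ L : ℝ} (hτ : 0 < τ)
    (hτL : τ * L < 1) {f : ℝ × E → E} (hf : ContDiff ℝ 1 f)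
    (hL : ∀ t ∈ Icc 0 τ, ∀ x, ‖fderiv ℝ f (t, x) ∘L .inr ℝ ℝ E‖ ≤ L)
    (w : C(Icc 0 τ, E)) (x₀ : E) :
    ∃ V, IsOpen V ∧ x₀ ∈ V ∧ ∃ X : E → C(Icc 0 τ, E), ContDiffOn ℝ 1 X V ∧
      ∀ x ∈ V, ∀ t : Icc 0 τ,
        X x t = x + (∫ s in (0 : ℝ)..t, f (s, X x (projIcc 0 τ hτ.le s))) + w t := by
  set g : C(Icc 0 τ × E, E) := ⟨fun p => f (p.1, p.2), by fun_prop⟩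
  set g' : C(Icc 0 τ × E, E →L[ℝ] E) := ⟨fun p => fderiv ℝ f (p.1, p.2) ∘L .inr ℝ ℝ E,
    ((hf.continuous_fderiv one_ne_zero).comp (by fun_prop)).clm_comp continuous_const⟩
  have hg (t : Icc 0 τ) (x : E) : HasFDerivAt (fun y => g (t, y)) (g' (t, x)) x :=
    (hf.differentiable one_ne_zero ((t : ℝ), x)).hasFDerivAt_comp_prodMk_right
  have hL0 : 0 ≤ L := (norm_nonneg _).trans (hL τ ⟨hτ.le, le_rfl⟩ 0)
  obtain ⟨V, hVo, hx₀V, X, hX, hXfix⟩ := exists_isOpen_contDiffOn_fixedPoint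
    (contDiff_picardMap hτ.le hg w) hτL
    (norm_fderiv_picardMap_comp_inr_le hτ.le hg hL0 (fun q => hL q.1 q.1.2 q.2) w) x₀
  refine ⟨V, hVo, hx₀V, X, hX, fun x hx t => ?_⟩
  conv_lhs => rw [← hXfix x hx]
  simp only [picardMap, ContinuousMap.add_apply, constCLM_apply, const_apply,
    primitiveCLM_apply, nemytskii_apply]
  congr 2
  refine intervalIntegral.integral_congr fun s hs => ?_
  rw [uIcc_of_le t.2.1] at hs
  simp [g, projIcc_of_mem hτ.le ⟨hs.1, hs.2.trans t.2.2⟩]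

end PicardMap

theorem forced_equation_local_solution_smooth_dependence_general
    (E : Type*) [NormedAddCommGroup E] [NormedSpace ℝ E] [CompleteSpace E]
    (f : ℝ × E → E) (hf : ContDiff ℝ 1 f)
    (φ : ℝ → ℝ) (hφ : ContinuousOn φ (Set.Ici 0))
    (hgrowth' : ∀ t : ℝ, 0 ≤ t → ∀ x v : E,
      ‖fderiv ℝ f (t, x) (0, v)‖ ^ 2 ≤ (φ t) ^ 2 * (1 + ‖x‖ ^ 2 + ‖v‖ ^ 2))
    (v : ℝ → E) (hv : ContinuousOn v (Set.Ici 0)) :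
    ∀ x₀ : E, ∃ τ : ℝ, ∃ hτ : 0 < τ, ∃ V : Set E, IsOpen V ∧ x₀ ∈ V ∧
      ∃ X : E → C(Set.Icc (0:ℝ) τ, E), ContDiffOn ℝ 1 X V ∧
        ∀ x ∈ V, ∀ t : Set.Icc (0:ℝ) τ,
          X x t = x + (∫ s in (0:ℝ)..(t:ℝ),
              f (s, X x (Set.projIcc 0 τ hτ.le s))) + v (t:ℝ) := by
  intro x₀
  obtain ⟨C, hC⟩ := isCompact_Icc.exists_bound_of_continuousOn (hφ.mono Icc_subset_Ici_self)
  set τ := (|C| + 1)⁻¹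
  have hτ : 0 < τ := by positivity
  have hτ1 : τ ≤ 1 := inv_le_one_of_one_le₀ (by linarith [abs_nonneg C])
  have hτC : τ * C < 1 := by
    calc τ * C ≤ τ * |C| := by gcongr; exact le_abs_self C
      _ < τ * (|C| + 1) := by gcongr; linarith
      _ = 1 := inv_mul_cancel₀ (by positivity)
  have hL (t : ℝ) (ht : t ∈ Icc 0 τ) (x : E) : ‖fderiv ℝ f (t, x) ∘L .inr ℝ ℝ E‖ ≤ C := by
    refine ((fderiv ℝ f (t, x) ∘L .inr ℝ ℝ E).opNorm_le_of_sq_norm_apply_le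
      (a := φ t) (c := 1 + ‖x‖ ^ 2) fun w => ?_).trans ?_
    · simpa [add_assoc] using hgrowth' t ht.1 x w
    · simpa using hC t ⟨ht.1, ht.2.trans hτ1⟩
  set w : C(Icc 0 τ, E) := ⟨fun t => v t, hv.comp_continuous continuous_subtype_val fun t => t.2.1⟩
  exact ⟨τ, hτ, exists_isOpen_contDiffOn_forced_solution hτ hτC hf hL w x₀⟩

/-- Deterministic pathwise form of the paper's main theorem: if `f : ℝ × E → E` is `C¹` with the
growth bounds `‖f(t,x)‖ + ‖∂_t f(t,x)‖ ≤ φ(t)(1+‖x‖)` and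
`‖∂_x f(t,x) v‖² ≤ φ(t)²(1+‖x‖²+‖v‖²)` on `[0,∞)`, and `v : [0,∞) → E` is continuous with
`v 0 = 0`, then for every `x₀ ∈ E` there are `τ > 0`, an open neighborhood `V ∋ x₀` and a map
`X : V → C([0,τ],E)`, continuously differentiable in the initial condition, with
`X(x)(t) = x + ∫_0^t f(s, X(x)(s)) ds + v(t)` for all `x ∈ V`, `t ∈ [0,τ]`. -/
theorem forced_equation_local_solution_smooth_dependence
    (E : Type*) [NormedAddCommGroup E] [NormedSpace ℝ E] [CompleteSpace E]
    (f : ℝ × E → E) (hf : ContDiff ℝ 1 f)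
    (φ : ℝ → ℝ) (hφ : ContinuousOn φ (Set.Ici 0))
    (hgrowth : ∀ t : ℝ, 0 ≤ t → ∀ x : E,
      ‖f (t, x)‖ + ‖fderiv ℝ f (t, x) (1, 0)‖ ≤ φ t * (1 + ‖x‖))
    (hgrowth' : ∀ t : ℝ, 0 ≤ t → ∀ x v : E,
      ‖fderiv ℝ f (t, x) (0, v)‖ ^ 2 ≤ (φ t) ^ 2 * (1 + ‖x‖ ^ 2 + ‖v‖ ^ 2))
    (v : ℝ → E) (hv : ContinuousOn v (Set.Ici 0)) (hv0 : v 0 = 0) :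
    ∀ x₀ : E, ∃ τ : ℝ, ∃ hτ : 0 < τ, ∃ V : Set E, IsOpen V ∧ x₀ ∈ V ∧
      ∃ X : E → C(Set.Icc (0:ℝ) τ, E), ContDiffOn ℝ 1 X V ∧
        ∀ x ∈ V, ∀ t : Set.Icc (0:ℝ) τ,
          X x t = x + (∫ s in (0:ℝ)..(t:ℝ),
              f (s, X x (Set.projIcc 0 τ hτ.le s))) + v (t:ℝ) :=
  forced_equation_local_solution_smooth_dependence_general E f hf φ hφ hgrowth' v hv
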